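/- In the group sequential trial setting, the bias of the sample mean μ̂_N = K_N/N satisfies the universal bound |E[μ̂_N − μ]| ≤ σ√(2/π) · (Σ_{i=1}^L 1/√mᵢ + L/√n). -/

import Mathlib

open MeasureTheory ProbabilityTheory Filter

noncomputable section

/-- The standard normal density. -/
def phi (u : ℝ) : ℝ := (Real.sqrt (2 * Real.pi))⁻¹ * Real.exp (-u ^ 2 / 2)

/-- The normal transform of a tuple `b = (b₀, …, b_{i-1})` of maps `ℝ → ℝ`. -/
def normalTransform (μ σ : ℝ) (i : ℕ) (b : Fin i → ℝ → ℝ)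
    (xs : Fin (i + 1) → ℝ) (x : ℝ) : ℝ :=
  (∫ z : Fin i → ℝ,
      (∏ j : Fin i,
        ((σ * Real.sqrt (xs j.castSucc))⁻¹ *
          phi ((z j - μ * xs j.castSucc) / (σ * Real.sqrt (xs j.castSucc))) *
          b j (∑ k ∈ Finset.Iic j, z k))) *
        ((σ * Real.sqrt (xs (Fin.last i)))⁻¹ *
          phi ((x - ∑ k, z k - μ * xs (Fin.last i)) / (σ * Real.sqrt (xs (Fin.last i)))))) /
  ((σ * Real.sqrt (∑ k, xs k))⁻¹ *
    phi ((x - μ * ∑ k, xs k) / (σ * Real.sqrt (∑ k, xs k))))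

/-- `Ksum X m = X₀ + ⋯ + X_{m-1}`, the sum of the first `m` outcomes. -/
def Ksum {Ω : Type*} (X : ℕ → Ω → ℝ) (mm : ℕ) (ω : Ω) : ℝ := ∑ k ∈ Finset.range mm, X k ω

/-- `𝒩ᵢ` from the paper (0-indexed: `scriptN μ σ ψ m i` is the paper's `𝒩_{i+1}`). -/
def scriptN (μ σ : ℝ) (ψ : ℕ → ℝ → ℝ) {L : ℕ} (m : Fin L → ℕ) (i : Fin L) (x : ℝ) : ℝ :=
  if (i : ℕ) = 0 then 1
  else normalTransform μ σ i.val
    (fun j => fun z => 1 - ψ (m (j.castLE i.isLt.le)) z)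
    (fun k => (m (k.castLE i.isLt) : ℝ) -
      if (k : ℕ) = 0 then 0
      else (m ⟨(k : ℕ) - 1, by have h1 := k.2; have h2 := i.2; omega⟩ : ℝ))
    x

/-- The group sequential trial setting from the paper. -/
structure IsGST {Ω : Type*} [MeasurableSpace Ω] (P : Measure Ω) (X : ℕ → Ω → ℝ)
    (μ σ : ℝ) (ψ : ℕ → ℝ → ℝ) (L : ℕ) (m : Fin L → ℕ) (n : ℕ) (N : Ω → ℕ) : Prop where
  isProb : IsProbabilityMeasure P
  sigma_pos : 0 < σ
  meas_X : ∀ k, Measurable (X k)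
  indep_X : iIndepFun X P
  map_X : ∀ k, Measure.map (X k) P = gaussianReal μ ⟨σ ^ 2, sq_nonneg σ⟩
  meas_psi : ∀ k, Measurable (ψ k)
  psi_mem : ∀ k z, ψ k z ∈ Set.Icc (0 : ℝ) 1
  L_pos : 0 < L
  m_pos : ∀ i, 0 < m i
  m_mono : StrictMono m
  m_lt_n : ∀ i, m i < n
  meas_N : Measurable N
  range_N : ∀ ω, N ω = n ∨ ∃ i, N ω = m i
  indep_N : ∀ i : Fin L,
    Indep (MeasurableSpace.generateFrom {{ω | N ω = m i}})
      (⨆ (k : ℕ) (_ : m i ≤ k), MeasurableSpace.comap (X k) inferInstance) P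
  cond_N : ∀ i : Fin L,
    (P[(Set.indicator {ω | N ω = m i} fun _ => (1 : ℝ)) |
        MeasurableSpace.comap (fun ω (k : Fin (m i)) => X k ω) inferInstance])
      =ᵐ[P] fun ω => ψ (m i) (Ksum X (m i) ω) *
        ∏ j ∈ Finset.univ.filter (fun j => j < i), (1 - ψ (m j) (Ksum X (m j) ω))

/-- The pointwise product `ψ_{mᵢ}𝒩ᵢ`. -/
def psiN (μ σ : ℝ) (ψ : ℕ → ℝ → ℝ) {L : ℕ} (m : Fin L → ℕ) (i : Fin L) (x : ℝ) : ℝ :=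
  ψ (m i) x * scriptN μ σ ψ m i x


section AuxProofs
open Real NNReal ENNReal

lemma pdf_conv_identity {v w : ℝ≥0} (hv : v ≠ 0) (hw : w ≠ 0) (a b t x : ℝ) :
    gaussianPDFReal a v x * gaussianPDFReal b w (t - x) =
    gaussianPDFReal (a + b) (v + w) t *
      gaussianPDFReal ((a * w + (t - b) * v) / (v + w)) (v * w / (v + w)) x := by
  have hV : (0:ℝ) < v := lt_of_le_of_ne v.coe_nonneg (by exact_mod_cast (Ne.symm hv))
  have hW : (0:ℝ) < w := lt_of_le_of_ne w.coe_nonneg (by exact_mod_cast (Ne.symm hw))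
  have hpi := Real.pi_pos
  simp only [gaussianPDFReal]
  push_cast
  set V := (v:ℝ); set W := (w:ℝ)
  have key1 : (√(2*π*V))⁻¹ * (√(2*π*W))⁻¹ = (√(2*π*(V+W)))⁻¹ * (√(2*π*(V*W/(V+W))))⁻¹ := by
    rw [← mul_inv, ← mul_inv, ← Real.sqrt_mul (by positivity), ← Real.sqrt_mul (by positivity)]
    congr 1
    field_simp
  have key2 : rexp (-(x - a)^2/(2*V)) * rexp (-(t - x - b)^2/(2*W)) =
      rexp (-(t - (a+b))^2/(2*(V+W))) *
      rexp (-(x - (a * W + (t - b) * V)/(V+W))^2/(2*(V*W/(V+W)))) := by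
    rw [← Real.exp_add, ← Real.exp_add]
    congr 1
    field_simp
    ring
  calc (√(2*π*V))⁻¹ * rexp (-(x - a)^2/(2*V)) * ((√(2*π*W))⁻¹ * rexp (-(t - x - b)^2/(2*W)))
      = ((√(2*π*V))⁻¹ * (√(2*π*W))⁻¹) * (rexp (-(x - a)^2/(2*V)) * rexp (-(t - x - b)^2/(2*W))) := by ring
    _ = _ := by rw [key1, key2]; ring


lemma gaussian_conv {v w : ℝ≥0} (hv : v ≠ 0) (hw : w ≠ 0) (a b : ℝ) :
    Measure.map (fun p : ℝ × ℝ => p.1 + p.2) ((gaussianReal a v).prod (gaussianReal b w)) =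
    gaussianReal (a + b) (v + w) := by
  have hvw : v + w ≠ 0 := by positivity
  have hu : v * w / (v + w) ≠ 0 := by positivity
  have hf := measurable_gaussianPDF a v
  have hg := measurable_gaussianPDF b w
  rw [gaussianReal_of_var_ne_zero a hv, gaussianReal_of_var_ne_zero b hw,
    gaussianReal_of_var_ne_zero _ hvw]
  ext s hs
  have hFmeas : Measurable (fun p : ℝ × ℝ => s.indicator 1 p.2 * gaussianPDF b w (p.2 - p.1)) :=
    ((measurable_const.indicator hs).comp measurable_snd).mul
      (hg.comp (measurable_snd.sub measurable_fst))
  rw [Measure.map_apply measurable_add hs, withDensity_apply _ hs]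
  rw [Measure.prod_apply (measurable_add hs)]
  have step1 : ∀ x : ℝ, (volume.withDensity (gaussianPDF b w))
      (Prod.mk x ⁻¹' ((fun p : ℝ × ℝ => p.1 + p.2) ⁻¹' s))
      = ∫⁻ t, s.indicator 1 t * gaussianPDF b w (t - x) := by
    intro x
    have hA : MeasurableSet ((fun y => x + y) ⁻¹' s) := (measurable_const_add x) hs
    have hpre : Prod.mk x ⁻¹' ((fun p : ℝ × ℝ => p.1 + p.2) ⁻¹' s) = (fun y => x + y) ⁻¹' s := rfl
    rw [hpre, withDensity_apply _ hA, ← lintegral_indicator hA]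
    rw [← lintegral_add_left_eq_self (fun t => s.indicator 1 t * gaussianPDF b w (t - x)) x]
    congr 1; ext y
    simp only [add_sub_cancel_left, Set.indicator_apply, Set.mem_preimage]
    by_cases h : x + y ∈ s <;> simp [h]
  simp_rw [step1]
  rw [lintegral_withDensity_eq_lintegral_mul volume hf hFmeas.lintegral_prod_right']
  have step2 : ∀ x : ℝ, gaussianPDF a v x * ∫⁻ t, s.indicator 1 t * gaussianPDF b w (t - x)
      = ∫⁻ t, s.indicator 1 t * (gaussianPDF a v x * gaussianPDF b w (t - x)) := by
    intro x
    have hm : Measurable (fun t : ℝ => s.indicator 1 t * gaussianPDF b w (t - x)) :=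
      (measurable_one.indicator hs).mul (hg.comp (measurable_id.sub measurable_const))
    rw [← lintegral_const_mul (gaussianPDF a v x) hm]
    congr 1; ext t; ring
  simp only [Pi.mul_apply]
  simp_rw [step2]
  rw [lintegral_lintegral_swap]
  swap
  · exact (((measurable_const.indicator hs).comp measurable_fst).mul
      ((hf.comp measurable_snd).mul (hg.comp (measurable_fst.sub measurable_snd)))).comp
        measurable_swap |>.aemeasurable
  have step3 : ∀ t : ℝ, ∫⁻ x, s.indicator 1 t * (gaussianPDF a v x * gaussianPDF b w (t - x))
      = s.indicator 1 t * gaussianPDF (a + b) (v + w) t := by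
    intro t
    have hm2 : Measurable (fun x : ℝ => gaussianPDF a v x * gaussianPDF b w (t - x)) :=
      hf.mul (hg.comp (measurable_const.sub measurable_id))
    rw [lintegral_const_mul _ hm2]
    congr 1
    have : ∀ x, gaussianPDF a v x * gaussianPDF b w (t - x)
        = ENNReal.ofReal (gaussianPDFReal (a + b) (v + w) t) *
          ENNReal.ofReal (gaussianPDFReal ((a * w + (t - b) * v) / (v + w)) (v * w / (v + w)) x) := by
      intro x
      rw [gaussianPDF, gaussianPDF, ← ENNReal.ofReal_mul (gaussianPDFReal_nonneg _ _ _),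
        pdf_conv_identity hv hw,
        ENNReal.ofReal_mul (gaussianPDFReal_nonneg _ _ _)]
    simp_rw [this]
    rw [lintegral_const_mul _ ((measurable_gaussianPDFReal _ _).ennreal_ofReal),
      lintegral_gaussianPDFReal_eq_one _ hu, mul_one, gaussianPDF]
  simp_rw [step3]
  rw [← lintegral_indicator hs]
  congr 1; ext t
  by_cases h : t ∈ s <;> simp [Set.indicator_apply, h]


lemma ae_eq_const_of_map_dirac {Ω : Type*} [MeasurableSpace Ω] {P : Measure Ω}
    [IsProbabilityMeasure P] {X : Ω → ℝ} (hX : Measurable X) {a : ℝ}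
    (h : P.map X = Measure.dirac a) : X =ᵐ[P] fun _ => a := by
  rw [Filter.EventuallyEq, ae_iff]
  have : P {ω | ¬ X ω = a} = P.map X {a}ᶜ := by
    rw [Measure.map_apply hX (measurableSet_singleton a).compl]
    rfl
  rw [this, h, Measure.dirac_apply' _ (measurableSet_singleton a).compl]
  simp

lemma indep_gaussian_add {Ω : Type*} [MeasurableSpace Ω] {P : Measure Ω}
    [IsProbabilityMeasure P] {X Y : Ω → ℝ} (hX : Measurable X) (hY : Measurable Y)
    (h : IndepFun X Y P) {a b : ℝ} {v w : ℝ≥0}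
    (hmX : P.map X = gaussianReal a v) (hmY : P.map Y = gaussianReal b w) :
    P.map (fun ω => X ω + Y ω) = gaussianReal (a + b) (v + w) := by
  by_cases hv : v = 0
  · subst hv
    have hae : X =ᵐ[P] fun _ => a :=
      ae_eq_const_of_map_dirac hX (by rwa [gaussianReal_zero_var] at hmX)
    have : (fun ω => X ω + Y ω) =ᵐ[P] fun ω => a + Y ω :=
      hae.mono fun ω hω => by simp [hω]
    rw [Measure.map_congr this,
      show (fun ω => a + Y ω) = (fun y => a + y) ∘ Y from rfl,
      ← Measure.map_map (measurable_const_add a) hY, hmY, gaussianReal_map_const_add,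
      add_comm b a, zero_add]
  by_cases hw : w = 0
  · subst hw
    have hae : Y =ᵐ[P] fun _ => b :=
      ae_eq_const_of_map_dirac hY (by rwa [gaussianReal_zero_var] at hmY)
    have : (fun ω => X ω + Y ω) =ᵐ[P] fun ω => X ω + b :=
      hae.mono fun ω hω => by simp [hω]
    rw [Measure.map_congr this,
      show (fun ω => X ω + b) = (fun y => y + b) ∘ X from rfl,
      ← Measure.map_map (measurable_add_const b) hX, hmX, gaussianReal_map_add_const,
      add_zero]
  have hprod : P.map (fun ω => (X ω, Y ω)) = (P.map X).prod (P.map Y) :=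
    (indepFun_iff_map_prod_eq_prod_map_map hX.aemeasurable hY.aemeasurable).mp h
  rw [show (fun ω => X ω + Y ω) = (fun p : ℝ × ℝ => p.1 + p.2) ∘ (fun ω => (X ω, Y ω)) from rfl,
    ← Measure.map_map measurable_add (hX.prodMk hY), hprod, hmX, hmY, gaussian_conv hv hw]


lemma measurable_ksum {Ω : Type*} [MeasurableSpace Ω] {X : ℕ → Ω → ℝ}
    (hmeas : ∀ k, Measurable (X k)) (k : ℕ) : Measurable (Ksum X k) :=
  Finset.measurable_sum _ fun i _ => hmeas i

lemma map_ksum {Ω : Type*} [MeasurableSpace Ω] {P : Measure Ω} [IsProbabilityMeasure P]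
    {X : ℕ → Ω → ℝ} {μ : ℝ} {V : ℝ≥0}
    (hmeas : ∀ k, Measurable (X k)) (hindep : iIndepFun X P)
    (hmap : ∀ k, P.map (X k) = gaussianReal μ V) (k : ℕ) :
    P.map (Ksum X k) = gaussianReal (k * μ) ((k : ℝ≥0) * V) := by
  induction k with
  | zero =>
    have : Ksum X 0 = fun _ => (0 : ℝ) := by funext ω; simp [Ksum]
    rw [this, Measure.map_const]
    simp [gaussianReal_zero_var]
  | succ k ih =>
    have hk : Ksum X (k + 1) = fun ω => Ksum X k ω + X k ω := by
      funext ω; simp [Ksum, Finset.sum_range_succ]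
    have hsum_eq : Ksum X k = ∑ i ∈ Finset.range k, X i := by
      funext ω; simp [Ksum, Finset.sum_apply]
    have hind : IndepFun (Ksum X k) (X k) P := by
      rw [hsum_eq]
      exact hindep.indepFun_finsetSum_of_notMem hmeas Finset.notMem_range_self
    rw [hk]
    have := indep_gaussian_add (measurable_ksum hmeas k) (hmeas k) hind ih (hmap k)
    rw [this]
    congr 1
    · push_cast; ring
    · push_cast; ring


lemma integral_Ioi_xexp : ∫ x in Set.Ioi (0:ℝ), x * rexp (-x ^ 2 / 2) = 1 := by
  have hderiv : ∀ x ∈ Set.Ici (0:ℝ), HasDerivAt (fun x : ℝ => -rexp (-x ^ 2 / 2))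
      (x * rexp (-x ^ 2 / 2)) x := by
    intro x _
    have h1 : HasDerivAt (fun x : ℝ => -x ^ 2 / 2) (-x) x := by
      have := ((hasDerivAt_pow 2 x).neg).div_const 2
      refine this.congr_deriv ?_
      push_cast; ring
    have h2 := (h1.exp).neg
    refine h2.congr_deriv ?_
    ring
  have hint : IntegrableOn (fun x : ℝ => x * rexp (-x ^ 2 / 2)) (Set.Ioi 0) := by
    have : (fun x : ℝ => x * rexp (-x ^ 2 / 2)) = fun x : ℝ => x * rexp (-(1/2) * x ^ 2) := by
      funext x; congr 1; ring_nf
    rw [this]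
    exact (integrable_mul_exp_neg_mul_sq (by norm_num : (0:ℝ) < 1/2)).integrableOn
  have htends : Tendsto (fun x : ℝ => -rexp (-x ^ 2 / 2)) atTop (nhds 0) := by
    rw [show (0:ℝ) = -0 by ring]
    apply Tendsto.neg
    apply tendsto_exp_atBot.comp
    have h3 : Tendsto (fun x : ℝ => x ^ 2 / 2) atTop atTop :=
      (tendsto_pow_atTop (two_ne_zero)).atTop_div_const (by norm_num)
    have := tendsto_neg_atTop_atBot.comp h3
    convert this using 1
    funext x; simp [Function.comp]; ring
  have := integral_Ioi_of_hasDerivAt_of_tendsto' hderiv hint htends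
  rw [this]
  norm_num

lemma integral_abs_stdGaussian : ∫ x, |x| ∂(gaussianReal 0 1) = Real.sqrt (2 / π) := by
  rw [gaussianReal_of_var_ne_zero 0 one_ne_zero]
  have heq : (volume.withDensity (gaussianPDF 0 1)) =
      volume.withDensity (fun x => ((gaussianPDFReal 0 1 x).toNNReal : ℝ≥0∞)) := rfl
  rw [heq, integral_withDensity_eq_integral_smul
    ((measurable_gaussianPDFReal 0 1).real_toNNReal) (fun x => |x|)]
  have h1 : ∀ x : ℝ, (gaussianPDFReal 0 1 x).toNNReal • |x|
      = (√(2 * π))⁻¹ * (|x| * rexp (-|x| ^ 2 / 2)) := by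
    intro x
    rw [NNReal.smul_def, Real.coe_toNNReal _ (gaussianPDFReal_nonneg _ _ _), smul_eq_mul]
    simp only [gaussianPDFReal, NNReal.coe_one, mul_one, sub_zero, sq_abs]
    ring
  simp_rw [h1]
  rw [integral_const_mul]
  rw [integral_comp_abs (f := fun t : ℝ => t * rexp (-t ^ 2 / 2)), integral_Ioi_xexp]
  have key : √(2 / π) * √(2 * π) = 2 := by
    rw [← Real.sqrt_mul (by positivity)]
    rw [show (2 / π) * (2 * π) = 2 ^ 2 by field_simp]
    exact Real.sqrt_sq (by norm_num)
  have h2pi : (0:ℝ) < √(2 * π) := Real.sqrt_pos.mpr (by positivity)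
  calc (√(2 * π))⁻¹ * (2 * 1) = (√(2 * π))⁻¹ * (√(2 / π) * √(2 * π)) := by rw [key]; ring
    _ = √(2 / π) := by field_simp


lemma map_affine_stdGaussian (c d : ℝ) :
    (gaussianReal 0 1).map (fun z => c * z + d) = gaussianReal d ⟨c ^ 2, sq_nonneg c⟩ := by
  rw [show (fun z : ℝ => c * z + d) = (fun y : ℝ => y + d) ∘ (fun z : ℝ => c * z) from rfl,
    ← Measure.map_map (measurable_add_const d) (measurable_const_mul c)]
  rw [show (fun z : ℝ => c * z) = (c * ·) from rfl, gaussianReal_map_const_mul c]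
  rw [gaussianReal_map_add_const d]
  simp
  rfl

lemma integrable_id_stdGaussian : Integrable (fun x : ℝ => x) (gaussianReal 0 1) := by
  rw [gaussianReal_of_var_ne_zero 0 one_ne_zero]
  rw [integrable_withDensity_iff (measurable_gaussianPDF 0 1)
    (Filter.Eventually.of_forall fun x => ENNReal.ofReal_lt_top)]
  have : (fun x : ℝ => x * (gaussianPDF 0 1 x).toReal)
      = fun x : ℝ => (√(2 * π))⁻¹ * (x * rexp (-(1/2) * x ^ 2)) := by
    funext x
    rw [gaussianPDF, ENNReal.toReal_ofReal (gaussianPDFReal_nonneg _ _ _)]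
    simp only [gaussianPDFReal, NNReal.coe_one, mul_one, sub_zero]
    rw [show -(1/2) * x ^ 2 = -x ^ 2 / 2 by ring]
    ring
  rw [this]
  exact (integrable_mul_exp_neg_mul_sq (by norm_num : (0:ℝ) < 1/2)).const_mul _

lemma moment_ksum {Ω : Type*} [MeasurableSpace Ω] {P : Measure Ω} [IsProbabilityMeasure P]
    {X : ℕ → Ω → ℝ} {μ σ : ℝ} (hσ : 0 < σ)
    (hmeas : ∀ k, Measurable (X k)) (hindep : iIndepFun X P)
    (hmap : ∀ k, P.map (X k) = gaussianReal μ ⟨σ ^ 2, sq_nonneg σ⟩) {k : ℕ} (hk : 0 < k) :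
    Integrable (fun ω => Ksum X k ω / k - μ) P ∧
    ∫ ω, |Ksum X k ω / k - μ| ∂P = σ * Real.sqrt (2 / π) / Real.sqrt k := by
  have hk' : (0:ℝ) < k := Nat.cast_pos.mpr hk
  have hsk : (0:ℝ) < Real.sqrt k := Real.sqrt_pos.mpr hk'
  set c : ℝ := σ * Real.sqrt k with hc
  have hcpos : 0 < c := by positivity
  have hveq : ((k : ℝ≥0) * ⟨σ ^ 2, sq_nonneg σ⟩) = ⟨c ^ 2, sq_nonneg c⟩ := by
    ext
    push_cast
    change ((k:ℝ≥0):ℝ) * σ ^ 2 = (σ * Real.sqrt k) ^ 2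
    rw [NNReal.coe_natCast, mul_pow, Real.sq_sqrt hk'.le]
    ring
  have hT : P.map (Ksum X k) = (gaussianReal 0 1).map (fun z => c * z + k * μ) := by
    rw [map_ksum hmeas hindep hmap k, map_affine_stdGaussian, hveq]
  have hck : c / k = σ / Real.sqrt k := by
    rw [hc, show (k:ℝ) = Real.sqrt k * Real.sqrt k from (Real.mul_self_sqrt hk'.le).symm]
    field_simp
    rw [Real.sqrt_sq hsk.le]
  set g : ℝ → ℝ := fun x => x / k - μ with hg
  have hgcont : Continuous g := (continuous_id.div_const _).sub continuous_const
  have hcomp : g ∘ (fun z => c * z + k * μ) = fun z => (c / k) * z := by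
    funext z
    simp only [hg, Function.comp]
    field_simp
    ring
  have hphi : Measurable (fun z : ℝ => c * z + k * μ) :=
    (measurable_const_mul c).add_const _
  have hint : Integrable (fun ω => Ksum X k ω / k - μ) P := by
    have h1 : Integrable g (P.map (Ksum X k)) := by
      rw [hT, integrable_map_measure (hgcont.aestronglyMeasurable) hphi.aemeasurable, hcomp]
      exact integrable_id_stdGaussian.const_mul _
    exact (integrable_map_measure (hgcont.aestronglyMeasurable)
      (measurable_ksum hmeas k).aemeasurable).mp h1
  refine ⟨hint, ?_⟩
  have habs : ∀ z : ℝ, |g ((fun z => c * z + k * μ) z)| = (σ / Real.sqrt k) * |z| := by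
    intro z
    have : g (c * z + k * μ) = (c / k) * z := congrFun hcomp z
    rw [this, abs_mul, hck, abs_of_pos (by positivity)]
  calc ∫ ω, |Ksum X k ω / k - μ| ∂P
      = ∫ ω, |g (Ksum X k ω)| ∂P := rfl
    _ = ∫ x, |g x| ∂(P.map (Ksum X k)) := by
        rw [integral_map (measurable_ksum hmeas k).aemeasurable
          (hgcont.abs.aestronglyMeasurable)]
    _ = ∫ z, |g (c * z + k * μ)| ∂(gaussianReal 0 1) := by
        rw [hT, integral_map hphi.aemeasurable (hgcont.abs.aestronglyMeasurable)]
    _ = ∫ z, (σ / Real.sqrt k) * |z| ∂(gaussianReal 0 1) := by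
        congr 1; funext z; exact habs z
    _ = (σ / Real.sqrt k) * Real.sqrt (2 / π) := by
        rw [integral_const_mul, integral_abs_stdGaussian]
    _ = σ * Real.sqrt (2 / π) / Real.sqrt k := by ring


end AuxProofs

/-- universal bound for the bias of the sample mean. -/
theorem stmt13 {Ω : Type*} [MeasurableSpace Ω] (P : Measure Ω) (X : ℕ → Ω → ℝ)
    (μ σ : ℝ) (ψ : ℕ → ℝ → ℝ) (L : ℕ) (m : Fin L → ℕ) (n : ℕ) (N : Ω → ℕ)
    (hGST : IsGST P X μ σ ψ L m n N) :
    |∫ ω, (Ksum X (N ω) ω / (N ω : ℝ) - μ) ∂P| ≤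
      σ * Real.sqrt (2 / Real.pi) *
        ((∑ i : Fin L, 1 / Real.sqrt (m i)) + (L : ℝ) / Real.sqrt n) := by

  haveI := hGST.isProb
  have hσ := hGST.sigma_pos
  have hmeasX := hGST.meas_X
  have hL := hGST.L_pos
  have hn : 0 < n := lt_trans (hGST.m_pos ⟨0, hL⟩) (hGST.m_lt_n ⟨0, hL⟩)
  set g : ℕ → Ω → ℝ := fun k ω => Ksum X k ω / k - μ with hgdef
  have hInt : ∀ {k : ℕ}, 0 < k → Integrable (g k) P :=
    fun hk => (moment_ksum hσ hmeasX hGST.indep_X hGST.map_X hk).1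
  have hMom : ∀ {k : ℕ}, 0 < k →
      ∫ ω, |g k ω| ∂P = σ * Real.sqrt (2 / Real.pi) / Real.sqrt k :=
    fun hk => (moment_ksum hσ hmeasX hGST.indep_X hGST.map_X hk).2
  set A : Fin L → Set Ω := fun i => {ω | N ω = m i} with hA
  set B : Set Ω := {ω | N ω = n} with hB
  have hAmeas : ∀ i, MeasurableSet (A i) := fun i => hGST.meas_N (measurableSet_singleton (m i))
  have hBmeas : MeasurableSet B := hGST.meas_N (measurableSet_singleton n)
  have hpt : (fun ω => Ksum X (N ω) ω / (N ω : ℝ) - μ)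
      = fun ω => (∑ i : Fin L, (A i).indicator (g (m i)) ω) + B.indicator (g n) ω := by
    funext ω
    rcases hGST.range_N ω with h | ⟨i, h⟩
    · have hsum : ∀ i : Fin L, (A i).indicator (g (m i)) ω = 0 := by
        intro i
        apply Set.indicator_of_notMem
        simp only [hA, Set.mem_setOf_eq, h]
        exact fun hc => (hGST.m_lt_n i).ne' hc
      rw [Finset.sum_eq_zero (fun i _ => hsum i),
        Set.indicator_of_mem (show ω ∈ B from h), h]
      simp [hgdef]
    · have hB0 : B.indicator (g n) ω = 0 := by
        apply Set.indicator_of_notMem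
        simp only [hB, Set.mem_setOf_eq, h]
        exact (hGST.m_lt_n i).ne
      have hs : ∑ j : Fin L, (A j).indicator (g (m j)) ω = g (m i) ω := by
        rw [Finset.sum_eq_single i]
        · exact Set.indicator_of_mem (show ω ∈ A i from h) _
        · intro j _ hj
          apply Set.indicator_of_notMem
          simp only [hA, Set.mem_setOf_eq, h]
          exact fun hc => hj (hGST.m_mono.injective hc.symm)
        · intro hi; exact absurd (Finset.mem_univ i) hi
      rw [hs, hB0, h]
      simp [hgdef]
  rw [hpt]
  have hIntInd : ∀ i : Fin L, Integrable ((A i).indicator (g (m i))) P :=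
    fun i => (hInt (hGST.m_pos i)).indicator (hAmeas i)
  have hIntB : Integrable (B.indicator (g n)) P := (hInt hn).indicator hBmeas
  rw [integral_add (integrable_finset_sum _ fun i _ => hIntInd i) hIntB,
    integral_finset_sum _ (fun i _ => hIntInd i)]
  have key : ∀ (s : Set Ω), MeasurableSet s → ∀ {k : ℕ}, 0 < k →
      |∫ ω, s.indicator (g k) ω ∂P| ≤ σ * Real.sqrt (2 / Real.pi) / Real.sqrt k := by
    intro s hs k hk
    calc |∫ ω, s.indicator (g k) ω ∂P| ≤ ∫ ω, |s.indicator (g k) ω| ∂P := by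
          simpa [Real.norm_eq_abs] using norm_integral_le_integral_norm (μ := P) (s.indicator (g k))
      _ ≤ ∫ ω, |g k ω| ∂P := by
          apply integral_mono ((hInt hk).indicator hs).abs (hInt hk).abs
          intro ω
          by_cases hω : ω ∈ s
          · simp [Set.indicator_of_mem hω]
          · simp [Set.indicator_of_notMem hω, abs_nonneg]
      _ = σ * Real.sqrt (2 / Real.pi) / Real.sqrt k := hMom hk
  have hLn : σ * Real.sqrt (2 / Real.pi) / Real.sqrt n
      ≤ σ * Real.sqrt (2 / Real.pi) * ((L : ℝ) / Real.sqrt n) := by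
    rw [div_eq_mul_one_div (σ * Real.sqrt (2 / Real.pi)) (Real.sqrt n)]
    apply mul_le_mul_of_nonneg_left _ (by positivity)
    gcongr
    exact_mod_cast hL
  calc |(∑ i : Fin L, ∫ ω, (A i).indicator (g (m i)) ω ∂P) + ∫ ω, B.indicator (g n) ω ∂P|
      ≤ (∑ i : Fin L, |∫ ω, (A i).indicator (g (m i)) ω ∂P|) + |∫ ω, B.indicator (g n) ω ∂P| :=
        (abs_add_le _ _).trans (add_le_add_left (Finset.abs_sum_le_sum_abs _ _) _)
    _ ≤ (∑ i : Fin L, σ * Real.sqrt (2 / Real.pi) / Real.sqrt (m i))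
        + σ * Real.sqrt (2 / Real.pi) / Real.sqrt n :=
        add_le_add (Finset.sum_le_sum fun i _ => key _ (hAmeas i) (hGST.m_pos i))
          (key _ hBmeas hn)
    _ ≤ σ * Real.sqrt (2 / Real.pi) *
        ((∑ i : Fin L, 1 / Real.sqrt (m i)) + (L : ℝ) / Real.sqrt n) := by
        rw [mul_add, Finset.mul_sum]
        apply add_le_add _ hLn
        · apply le_of_eq
          apply Finset.sum_congr rfl
          intro i _
          rw [div_eq_mul_one_div]
        end
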